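/- arXiv:1605.03654 — 6 statements merged into one kernel-verified Lean document; each statement's English description precedes it below -/
import Mathlib

section
/- Let q ≥ 2 and let B = ε₁ε₂⋯ε_ℓ be a block of ℓ base-q digits that is not the all-zero block 00⋯0. For a nonnegative integer n, let c_B(n) denote the number of occurrences of B as a block of consecutive digits in the base-q expansion of n, where the expansion is regarded as padded with infinitely many zeros on both the left and the right (this count is finite since B is not all zeros). Then c_B is q-quasiadditive with parameter ℓ: for all nonnegative integers a, b, k with b < q^k, one has c_B(q^(k+ℓ)·a + b) = c_B(a) + c_B(b). -/
/-- The digit of `n` in base `q` at position `j ∈ ℤ`, where the base-`q` expansion of `n`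
is regarded as padded with infinitely many zeros on both the left and the right. -/
def digitZ (q n : ℕ) (j : ℤ) : ℕ :=
  if 0 ≤ j then n / q ^ j.toNat % q else 0

/-- The number of occurrences of the block `B = ε₁ε₂⋯ε_ℓ` (here `ε i` for `i : Fin ℓ`,
with `ε 0 = ε₁` the most significant digit of the block) as a block of consecutive digits
in the base-`q` expansion of `n`, regarded as padded with infinitely many zeros on both
ends: an occurrence at position `j ∈ ℤ` means that for each `i`, the digit at position
`j + (ℓ - 1 - i)` equals `ε i`. -/
noncomputable def blockCount (q ℓ : ℕ) (ε : Fin ℓ → ℕ) (n : ℕ) : ℕ :=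
  Nat.card {j : ℤ // ∀ i : Fin ℓ, digitZ q n (j + ((ℓ - 1 - (i : ℕ) : ℕ) : ℤ)) = ε i}

/-! The digits of `q ^ m * a + b` with `b < q ^ m` are those of `b` below position `m` and
those of `a`, shifted by `m`, from position `m` on. An occurrence of a nonzero block in a
number below `q ^ k` starts in `[1 - ℓ, k)`, so for `m = k + ℓ` the occurrences in `b` and
the shifted occurrences in `a` are disjoint, and every window of `ℓ` digits of
`q ^ (k + ℓ) * a + b` lies entirely in the digits of `b` or entirely in the shifted digits
of `a`. -/

section Digits

variable {q m a b : ℕ}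

theorem pow_mul_add_div_pow_mod_of_lt (hq : 0 < q) {p : ℕ} (hp : p < m) :
    (q ^ m * a + b) / q ^ p % q = b / q ^ p % q := by
  obtain ⟨d, rfl⟩ : ∃ d, m = p + d + 1 := ⟨m - p - 1, by omega⟩
  have hsplit : q ^ (p + d + 1) * a + b = q ^ p * (q * (q ^ d * a)) + b := by ring
  rw [hsplit, Nat.mul_add_div (pow_pos hq p), Nat.mul_add_mod]

theorem pow_mul_add_div_pow_of_le (hq : 0 < q) (hb : b < q ^ m) {p : ℕ} (hp : m ≤ p) :
    (q ^ m * a + b) / q ^ p = a / q ^ (p - m) := by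
  have hhigh : (q ^ m * a + b) / q ^ m = a := by
    rw [Nat.mul_add_div (pow_pos hq m), Nat.div_eq_of_lt hb, add_zero]
  rw [← Nat.add_sub_cancel' hp, pow_add, ← Nat.div_div_eq_div_mul, hhigh, Nat.add_sub_cancel_left]

theorem digitZ_of_neg (n : ℕ) {j : ℤ} (hj : j < 0) : digitZ q n j = 0 :=
  if_neg (not_le.mpr hj)

theorem digitZ_of_lt_pow (hq : 0 < q) {n k : ℕ} (hn : n < q ^ k) {j : ℤ} (hj : k ≤ j) :
    digitZ q n j = 0 := by
  rw [digitZ, if_pos (by omega),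
    Nat.div_eq_of_lt (hn.trans_le (Nat.pow_le_pow_right hq (by omega))), Nat.zero_mod]

theorem digitZ_pow_mul_add (hq : 0 < q) (hb : b < q ^ m) (j : ℤ) :
    digitZ q (q ^ m * a + b) j = digitZ q a (j - m) + digitZ q b j := by
  rcases lt_or_ge j m with hjm | hjm
  · rw [digitZ_of_neg a (by omega), zero_add]
    rcases lt_or_ge j 0 with hj | hj
    · rw [digitZ_of_neg _ hj, digitZ_of_neg _ hj]
    · rw [digitZ, digitZ, if_pos hj, if_pos hj, pow_mul_add_div_pow_mod_of_lt hq (by omega)]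
  · rw [digitZ_of_lt_pow hq hb hjm, add_zero, digitZ, digitZ, if_pos (by omega),
      if_pos (by omega), pow_mul_add_div_pow_of_le hq hb (by omega)]
    congr 4
    omega

end Digits

section Occurrences

variable {q ℓ : ℕ} {ε : Fin ℓ → ℕ}

def blockOccurrences (q ℓ : ℕ) (ε : Fin ℓ → ℕ) (n : ℕ) : Set ℤ :=
  {j | ∀ i : Fin ℓ, digitZ q n (j + ((ℓ - 1 - (i : ℕ) : ℕ) : ℤ)) = ε i}

theorem blockCount_eq_ncard (n : ℕ) :
    blockCount q ℓ ε n = (blockOccurrences q ℓ ε n).ncard :=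
  rfl

theorem mem_blockOccurrences_congr {n n' : ℕ} {j j' : ℤ}
    (h : ∀ c : ℕ, c < ℓ → digitZ q n (j + c) = digitZ q n' (j' + c)) :
    j ∈ blockOccurrences q ℓ ε n ↔ j' ∈ blockOccurrences q ℓ ε n' := by
  exact forall_congr' fun i => by rw [h _ (by omega)]

theorem blockOccurrences_subset_Ico (hq : 0 < q) (hne : ∃ i, ε i ≠ 0) {n k : ℕ}
    (hn : n < q ^ k) : blockOccurrences q ℓ ε n ⊆ Set.Ico (1 - (ℓ : ℤ)) k := by
  intro j hj
  obtain ⟨i, hi⟩ := hne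
  have hdigit : digitZ q n (j + ((ℓ - 1 - (i : ℕ) : ℕ) : ℤ)) ≠ 0 := hj i ▸ hi
  have hnonneg : ¬ j + ((ℓ - 1 - (i : ℕ) : ℕ) : ℤ) < 0 := fun h => hdigit (digitZ_of_neg n h)
  have hlt : ¬ (k : ℤ) ≤ j + ((ℓ - 1 - (i : ℕ) : ℕ) : ℤ) :=
    fun h => hdigit (digitZ_of_lt_pow hq hn h)
  have := i.isLt
  constructor <;> omega

theorem blockOccurrences_finite (hq : 1 < q) (hne : ∃ i, ε i ≠ 0) (n : ℕ) :
    (blockOccurrences q ℓ ε n).Finite :=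
  (Set.finite_Ico _ _).subset (blockOccurrences_subset_Ico (by omega) hne (Nat.lt_pow_self hq))

theorem blockOccurrences_pow_mul_add (hq : 1 < q) (hne : ∃ i, ε i ≠ 0) {a b k : ℕ}
    (hb : b < q ^ k) :
    blockOccurrences q ℓ ε (q ^ (k + ℓ) * a + b) =
      blockOccurrences q ℓ ε b ∪ (· + ((k + ℓ : ℕ) : ℤ)) '' blockOccurrences q ℓ ε a := by
  have hq0 : 0 < q := by omega
  have hb' : b < q ^ (k + ℓ) := hb.trans_le (Nat.pow_le_pow_right hq0 (by omega))
  have hocc_b := blockOccurrences_subset_Ico (ε := ε) hq0 hne hb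
  have hocc_a := blockOccurrences_subset_Ico (ε := ε) hq0 hne (Nat.lt_pow_self (n := a) hq)
  ext j
  rw [Set.mem_union, Set.image_add_right, Set.mem_preimage]
  rcases lt_or_ge j k with hjk | hjk
  · have hshift : j + -((k + ℓ : ℕ) : ℤ) ∉ blockOccurrences q ℓ ε a :=
      fun h => by have := (hocc_a h).1; omega
    refine (mem_blockOccurrences_congr fun c hc => ?_).trans (or_iff_left hshift).symm
    rw [digitZ_pow_mul_add hq0 hb', digitZ_of_neg a (by omega), zero_add]
  · have hlow : j ∉ blockOccurrences q ℓ ε b := fun h => by have := (hocc_b h).2; omega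
    refine (mem_blockOccurrences_congr fun c hc => ?_).trans (or_iff_right hlow).symm
    rw [digitZ_pow_mul_add hq0 hb', digitZ_of_lt_pow hq0 hb (by omega), add_zero]
    congr 1
    ring

end Occurrences

theorem blockCount_quasiAdditive_general (q ℓ : ℕ) (hq : 2 ≤ q) (ε : Fin ℓ → ℕ)
    (hne : ∃ i, ε i ≠ 0) :
    ∀ a b k : ℕ, b < q ^ k →
      blockCount q ℓ ε (q ^ (k + ℓ) * a + b) = blockCount q ℓ ε a + blockCount q ℓ ε b := by
  intro a b k hb
  have hq1 : 1 < q := hq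
  have hdisjoint : Disjoint (blockOccurrences q ℓ ε b)
      ((· + ((k + ℓ : ℕ) : ℤ)) '' blockOccurrences q ℓ ε a) := by
    rw [Set.disjoint_left]
    rintro j hj ⟨j', hj', rfl⟩
    have hlow := (blockOccurrences_subset_Ico (by omega) hne hb hj).2
    dsimp only at hlow
    have hhigh := (blockOccurrences_subset_Ico (by omega) hne (Nat.lt_pow_self (n := a) hq1) hj').1
    omega
  rw [blockCount_eq_ncard, blockCount_eq_ncard, blockCount_eq_ncard,
    blockOccurrences_pow_mul_add hq1 hne hb,
    Set.ncard_union_eq hdisjoint (blockOccurrences_finite hq1 hne b)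
      ((blockOccurrences_finite hq1 hne a).image _),
    Set.ncard_image_of_injective _ (add_left_injective _), add_comm]

/-- If `B` is not the all-zero block, then the block count `c_B` is `q`-quasiadditive
with parameter `ℓ`. -/
theorem blockCount_quasiAdditive (q ℓ : ℕ) (hq : 2 ≤ q) (ε : Fin ℓ → ℕ)
    (hlt : ∀ i, ε i < q) (hne : ∃ i, ε i ≠ 0) :
    ∀ a b k : ℕ, b < q ^ k →
      blockCount q ℓ ε (q ^ (k + ℓ) * a + b) = blockCount q ℓ ε a + blockCount q ℓ ε b :=
  blockCount_quasiAdditive_general q ℓ hq ε hne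
end

section
/- Let hg(n) denote the number of ones in the binary expansion of n XOR ⌊n/2⌋ (the Hamming weight of the Gray code of n, which equals the number of runs in the binary representation of n), and define f(n) = hg(n) if n is even and f(n) = hg(n) + 1 if n is odd. Then f is 2-quasiadditive: for all nonnegative integers a, b, k with b < 2^k, one has f(2^(k+2)·a + b) = f(a) + f(b). -/
/-- The Hamming weight of the Gray code of `n`: the number of ones in the binary
expansion of `n XOR ⌊n/2⌋`. It equals the number of runs in the binary representation
of `n`. -/
def grayWeight (n : ℕ) : ℕ := (Nat.digits 2 (n ^^^ (n / 2))).count 1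

/-- The modified run-count function: `hg(n)` for even `n` and `hg(n) + 1` for odd `n`. -/
def modifiedGrayWeight (n : ℕ) : ℕ :=
  if n % 2 = 0 then grayWeight n else grayWeight n + 1

/-- Number of ones in the binary expansion. -/
private def ones (n : ℕ) : ℕ := (Nat.digits 2 n).count 1

private lemma ones_split {m a b : ℕ} (hb : b < 2 ^ m) :
    ones (2 ^ m * a + b) = ones a + ones b := by
  rcases Nat.eq_zero_or_pos a with rfl | ha
  · simp [ones]
  · have hL : (Nat.digits 2 b).length ≤ m := by
      rcases Nat.eq_zero_or_pos b with rfl | hb0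
      · simp
      · rw [Nat.digits_len 2 b (by norm_num) (by omega)]
        have := Nat.log_lt_of_lt_pow (by omega : b ≠ 0) hb
        omega
    have key := Nat.digits_append_zeroes_append_digits
      (b := 2) (k := m - (Nat.digits 2 b).length) (m := a) (n := b)
      (by norm_num) ha
    rw [Nat.add_sub_cancel' hL] at key
    have : 2 ^ m * a + b = b + 2 ^ m * a := by ring
    rw [ones, this, ← key]
    simp [ones, List.count_append, List.count_replicate]
    omega

private lemma xor_split {m u v x y : ℕ} (hx : x < 2 ^ m) (hy : y < 2 ^ m) :
    (2 ^ m * u + x) ^^^ (2 ^ m * v + y) = 2 ^ m * (u ^^^ v) + (x ^^^ y) := by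
  apply Nat.eq_of_testBit_eq
  intro j
  rw [Nat.testBit_xor, Nat.testBit_two_pow_mul_add _ hx,
    Nat.testBit_two_pow_mul_add _ hy,
    Nat.testBit_two_pow_mul_add _ (Nat.xor_lt_two_pow hx hy), Nat.testBit_xor,
    Nat.testBit_xor]
  split <;> simp

private lemma two_mul_xor (a : ℕ) : (2 * a) ^^^ a = 2 * (a ^^^ a / 2) + a % 2 := by
  have h := xor_split (m := 1) (u := a) (v := a / 2) (x := 0) (y := a % 2)
    (by norm_num) (by omega)
  simpa [Nat.div_add_mod, pow_one] using h

private lemma ones_two_mul_xor (a : ℕ) : ones ((2 * a) ^^^ a) = ones (a ^^^ a / 2) + a % 2 := by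
  rw [two_mul_xor]
  have h := ones_split (m := 1) (a := a ^^^ a / 2) (b := a % 2) (by omega)
  rw [pow_one] at h
  rw [h]
  rcases Nat.mod_two_eq_zero_or_one a with h2 | h2 <;> simp [h2, ones]

private lemma grayWeight_split {a b k : ℕ} (hb : b < 2 ^ k) :
    grayWeight (2 ^ (k + 2) * a + b) = grayWeight a + a % 2 + grayWeight b := by
  have hb1 : b < 2 ^ (k + 1) := lt_of_lt_of_le hb (Nat.pow_le_pow_right (by norm_num) (by omega))
  have hb2 : b / 2 < 2 ^ (k + 1) := lt_of_le_of_lt (Nat.div_le_self _ _) hb1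
  have hn : 2 ^ (k + 2) * a + b = 2 ^ (k + 1) * (2 * a) + b := by ring
  have hd : (2 ^ (k + 2) * a + b) / 2 = 2 ^ (k + 1) * a + b / 2 := by
    have : 2 ^ (k + 2) * a + b = b + 2 * (2 ^ (k + 1) * a) := by ring
    rw [this, Nat.add_mul_div_left _ _ (by norm_num)]
    ring
  rw [grayWeight, hd]
  conv_lhs => rw [hn]
  rw [xor_split hb1 hb2]
  show ones _ = _
  rw [ones_split (Nat.xor_lt_two_pow hb1 hb2), ones_two_mul_xor]
  rfl

/-- The function `f` with `f(n) = hg(n)` for even `n` and `f(n) = hg(n) + 1` for odd `n`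
is `2`-quasiadditive with parameter `2`. -/
theorem modifiedGrayWeight_quasiAdditive :
    ∀ a b k : ℕ, b < 2 ^ k →
      modifiedGrayWeight (2 ^ (k + 2) * a + b)
        = modifiedGrayWeight a + modifiedGrayWeight b := by
  intro a b k hb
  have hmod : (2 ^ (k + 2) * a + b) % 2 = b % 2 := by
    have h2 : 2 ^ (k + 2) * a % 2 = 0 := by
      have he : 2 ^ (k + 2) * a = 2 * (2 ^ (k + 1) * a) := by ring
      simp [he]
    omega
  unfold modifiedGrayWeight
  rw [grayWeight_split hb, hmod]
  rcases Nat.mod_two_eq_zero_or_one a with ha | ha <;>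
    rcases Nat.mod_two_eq_zero_or_one b with hbb | hbb <;>
      simp [ha, hbb] <;> omega
end

section
/- Let h be a function on the nonnegative integers satisfying h(0) = 0, h(2n) = h(n) for all n ≥ 0, h(4n+1) = h(n) + 1 for all n ≥ 0, and h(4n+3) = h(n+1) + 1 for all n ≥ 0 (i.e., h(4m−1) = h(m) + 1 for m ≥ 1). (This function h is the Hamming weight of the nonadjacent form, the minimum number of nonzero digits in a binary {0,1,−1}-representation.) Then h is 2-quasiadditive with parameter 2: for all nonnegative integers a, b, k with b < 2^k, one has h(2^(k+2)·a + b) = h(a) + h(b). -/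
theorem nafWeight_aux (h : ℕ → ℕ)
    (h0 : h 0 = 0)
    (heven : ∀ n : ℕ, h (2 * n) = h n)
    (h1 : ∀ n : ℕ, h (4 * n + 1) = h n + 1)
    (h3 : ∀ n : ℕ, h (4 * n + 3) = h (n + 1) + 1) :
    ∀ k a b : ℕ, b ≤ 2 ^ k → h (2 ^ (k + 2) * a + b) = h a + h b := by
  have h1' : h 1 = 1 := by have := h1 0; simpa [h0] using this
  intro k
  induction k using Nat.strong_induction_on with
  | _ k IH =>
    match k with
    | 0 =>
      intro a b hb
      interval_cases b
      · have e : 2 ^ (0 + 2) * a + 0 = 2 * (2 * a) := by ring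
        rw [e, heven, heven, h0]; ring
      · have e : 2 ^ (0 + 2) * a + 1 = 4 * a + 1 := by ring
        rw [e, h1, h1']
    | 1 =>
      intro a b hb
      have : b ≤ 2 := by simpa using hb
      interval_cases b
      · have e : 2 ^ (1 + 2) * a + 0 = 2 * (2 * (2 * a)) := by ring
        rw [e, heven, heven, heven, h0]; ring
      · have e : 2 ^ (1 + 2) * a + 1 = 4 * (2 * a) + 1 := by ring
        rw [e, h1, heven, h1']
      · have e : 2 ^ (1 + 2) * a + 2 = 2 * (4 * a + 1) := by ring
        have e2 : (2 : ℕ) = 2 * 1 := by norm_num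
        rw [e, heven, h1, e2, heven, h1']
    | (k + 2) =>
      intro a b hb
      have hpow : (2 : ℕ) ^ (k + 2) = 4 * 2 ^ k := by ring
      rcases Nat.even_or_odd b with he | ho
      · obtain ⟨b', rfl⟩ := he
        have hb' : b' ≤ 2 ^ (k + 1) := by
          have : (2 : ℕ) ^ (k + 2) = 2 * 2 ^ (k + 1) := by ring
          omega
        have e : 2 ^ (k + 2 + 2) * a + (b' + b') = 2 * (2 ^ (k + 1 + 2) * a + b') := by ring
        have e2 : b' + b' = 2 * b' := by ring
        rw [e, heven, IH (k + 1) (by omega) a b' hb', e2, heven]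
      · obtain ⟨c, rfl⟩ := ho
        rcases Nat.even_or_odd c with hce | hco
        · obtain ⟨d, rfl⟩ := hce
          have hd : d ≤ 2 ^ k := by omega
          have e : 2 ^ (k + 2 + 2) * a + (2 * (d + d) + 1)
              = 4 * (2 ^ (k + 2) * a + d) + 1 := by ring
          have e2 : 2 * (d + d) + 1 = 4 * d + 1 := by ring
          rw [e, h1, IH k (by omega) a d hd, e2, h1]; ring
        · obtain ⟨d, rfl⟩ := hco
          have hd : d + 1 ≤ 2 ^ k := by
            have hodd : 2 * (2 * d + 1) + 1 ≠ 2 ^ (k + 2) := by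
              intro heq; omega
            omega
          have e : 2 ^ (k + 2 + 2) * a + (2 * (2 * d + 1) + 1)
              = 4 * (2 ^ (k + 2) * a + d) + 3 := by ring
          have e2 : 2 * (2 * d + 1) + 1 = 4 * d + 3 := by ring
          rw [e, h3, show 2 ^ (k + 2) * a + d + 1 = 2 ^ (k + 2) * a + (d + 1) from by ring,
            IH k (by omega) a (d + 1) hd, e2, h3]; ring

/-- The Hamming weight of the nonadjacent form, characterised by the recursions
`h(0) = 0`, `h(2n) = h(n)`, `h(4n+1) = h(n) + 1`, `h(4n+3) = h(n+1) + 1`,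
is `2`-quasiadditive with parameter `2`. -/
theorem nafWeight_quasiAdditive (h : ℕ → ℕ)
    (h0 : h 0 = 0)
    (heven : ∀ n : ℕ, h (2 * n) = h n)
    (h1 : ∀ n : ℕ, h (4 * n + 1) = h n + 1)
    (h3 : ∀ n : ℕ, h (4 * n + 3) = h (n + 1) + 1) :
    ∀ a b k : ℕ, b < 2 ^ k → h (2 ^ (k + 2) * a + b) = h a + h b := by
  intro a b k hb
  exact nafWeight_aux h h0 heven h1 h3 k a b hb.le
end

section
/- Let u₁, u₂, u₃, u₄, u₅ be functions on the nonnegative integers satisfying u₁(0) = u₂(0) = u₃(0) = u₄(0) = u₅(0) = 1, u₁(1) = u₂(1) = 1, u₃(1) = u₄(1) = u₅(1) = 0, and for all n ≥ 0 (with the equations at argument 2n+1 imposed for n ≥ 0, so that all values are determined): u₁(2n) = u₁(n), u₁(2n+1) = u₂(n) + u₄(n+1), u₂(2n) = u₁(n), u₂(2n+1) = u₃(n), u₃(2n) = u₂(n), u₃(2n+1) = 0, u₄(2n) = u₁(n), u₄(2n+1) = u₅(n+1), u₅(2n) = u₄(n), u₅(2n+1) = 0. (Then u₁(n) is the number of representations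 of n of minimum Hamming weight in base 2 with digits {0,1,−1}.) Then u₁ is 2-quasimultiplicative with parameter 3: for all nonnegative integers a, b, k with b < 2^k, one has u₁(2^(k+3)·a + b) = u₁(a)·u₁(b). -/
/-- The number of optimal `{0,1,-1}`-representations, given by the system of recursions
of Grabner and Heuberger, is `2`-quasimultiplicative with parameter `3`. -/
theorem optimalRepresentations_quasiMultiplicative (u1 u2 u3 u4 u5 : ℕ → ℕ)
    (h10 : u1 0 = 1) (h20 : u2 0 = 1) (h30 : u3 0 = 1) (h40 : u4 0 = 1) (h50 : u5 0 = 1)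
    (h11 : u1 1 = 1) (h21 : u2 1 = 1) (h31 : u3 1 = 0) (h41 : u4 1 = 0) (h51 : u5 1 = 0)
    (h1e : ∀ n : ℕ, u1 (2 * n) = u1 n) (h1o : ∀ n : ℕ, u1 (2 * n + 1) = u2 n + u4 (n + 1))
    (h2e : ∀ n : ℕ, u2 (2 * n) = u1 n) (h2o : ∀ n : ℕ, u2 (2 * n + 1) = u3 n)
    (h3e : ∀ n : ℕ, u3 (2 * n) = u2 n) (h3o : ∀ n : ℕ, u3 (2 * n + 1) = 0)
    (h4e : ∀ n : ℕ, u4 (2 * n) = u1 n) (h4o : ∀ n : ℕ, u4 (2 * n + 1) = u5 (n + 1))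
    (h5e : ∀ n : ℕ, u5 (2 * n) = u4 n) (h5o : ∀ n : ℕ, u5 (2 * n + 1) = 0) :
    ∀ a b k : ℕ, b < 2 ^ k → u1 (2 ^ (k + 3) * a + b) = u1 a * u1 b := by
  have key : ∀ k a b : ℕ, b < 2 ^ k →
      (u1 (2 ^ (k + 3) * a + b) = u1 a * u1 b ∧
       u2 (2 ^ (k + 3) * a + b) = u1 a * u2 b ∧
       u3 (2 ^ (k + 3) * a + b) = u1 a * u3 b ∧
       u4 (2 ^ (k + 3) * a + b) = u1 a * u4 b ∧
       u5 (2 ^ (k + 3) * a + b) = u1 a * u5 b) ∧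
      (u1 (2 ^ (k + 3) * a + b + 1) = u1 a * u1 (b + 1) ∧
       u2 (2 ^ (k + 3) * a + b + 1) = u1 a * u2 (b + 1) ∧
       u3 (2 ^ (k + 3) * a + b + 1) = u1 a * u3 (b + 1) ∧
       u4 (2 ^ (k + 3) * a + b + 1) = u1 a * u4 (b + 1) ∧
       u5 (2 ^ (k + 3) * a + b + 1) = u1 a * u5 (b + 1)) := by
    intro k
    induction k with
    | zero =>
      intro a b hb
      interval_cases b
      have h8 : 2 ^ (0 + 3) * a + 0 = 2 * (2 * (2 * a)) := by ring
      have h81 : 2 ^ (0 + 3) * a + 0 + 1 = 2 * (2 * (2 * a)) + 1 := by ring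
      have e2 : u1 (2 * a) = u1 a := h1e a
      have e4 : u1 (2 * (2 * a)) = u1 a := by rw [h1e]; exact e2
      refine ⟨⟨?_, ?_, ?_, ?_, ?_⟩, ?_, ?_, ?_, ?_, ?_⟩
      · rw [h8, h1e, e4, h10, mul_one]
      · rw [h8, h2e, e4, h20, mul_one]
      · rw [h8, h3e, h2e, e2, h30, mul_one]
      · rw [h8, h4e, e4, h40, mul_one]
      · rw [h8, h5e, h4e, e2, h50, mul_one]
      · rw [h81, h1o, h2e, e2, h4o, h5o]; simp [h11]
      · rw [h81, h2o, h3e, h2e]; simp [h21]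
      · rw [h81, h3o]; simp [h31]
      · rw [h81, h4o, h5o]; simp [h41]
      · rw [h81, h5o]; simp [h51]
    | succ k ih =>
      intro a b hb
      have hpow : (2 : ℕ) ^ (k + 1) = 2 * 2 ^ k := by ring
      rcases Nat.even_or_odd b with ⟨c, hc2⟩ | ⟨c, hc2⟩
      · obtain rfl : b = 2 * c := by omega
        have hc : c < 2 ^ k := by omega
        obtain ⟨⟨H1, H2, H3, H4, H5⟩, G1, G2, G3, G4, G5⟩ := ih a c hc
        have hN : 2 ^ (k + 1 + 3) * a + 2 * c = 2 * (2 ^ (k + 3) * a + c) := by ring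
        have hN1 : 2 ^ (k + 1 + 3) * a + 2 * c + 1 = 2 * (2 ^ (k + 3) * a + c) + 1 := by ring
        refine ⟨⟨?_, ?_, ?_, ?_, ?_⟩, ?_, ?_, ?_, ?_, ?_⟩
        · rw [hN, h1e, H1, h1e]
        · rw [hN, h2e, H1, h2e]
        · rw [hN, h3e, H2, h3e]
        · rw [hN, h4e, H1, h4e]
        · rw [hN, h5e, H4, h5e]
        · rw [hN1, h1o, h1o, H2, G4]; ring
        · rw [hN1, h2o, h2o, H3]
        · rw [hN1, h3o, h3o, mul_zero]
        · rw [hN1, h4o, h4o, G5]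
        · rw [hN1, h5o, h5o, mul_zero]
      · obtain rfl : b = 2 * c + 1 := by omega
        have hc : c < 2 ^ k := by omega
        obtain ⟨⟨H1, H2, H3, H4, H5⟩, G1, G2, G3, G4, G5⟩ := ih a c hc
        have hN : 2 ^ (k + 1 + 3) * a + (2 * c + 1) = 2 * (2 ^ (k + 3) * a + c) + 1 := by ring
        have hN1 : 2 ^ (k + 1 + 3) * a + (2 * c + 1) + 1
            = 2 * (2 ^ (k + 3) * a + c + 1) := by ring
        refine ⟨⟨?_, ?_, ?_, ?_, ?_⟩, ?_, ?_, ?_, ?_, ?_⟩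
        · rw [hN, h1o, h1o, H2, G4]; ring
        · rw [hN, h2o, h2o, H3]
        · rw [hN, h3o, h3o, mul_zero]
        · rw [hN, h4o, h4o, G5]
        · rw [hN, h5o, h5o, mul_zero]
        · rw [hN1, h1e, G1, show 2 * c + 1 + 1 = 2 * (c + 1) from by ring, h1e]
        · rw [hN1, h2e, G1, show 2 * c + 1 + 1 = 2 * (c + 1) from by ring, h2e]
        · rw [hN1, h3e, G2, show 2 * c + 1 + 1 = 2 * (c + 1) from by ring, h3e]
        · rw [hN1, h4e, G1, show 2 * c + 1 + 1 = 2 * (c + 1) from by ring, h4e]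
        · rw [hN1, h5e, G4, show 2 * c + 1 + 1 = 2 * (c + 1) from by ring, h5e]
  intro a b k hb
  exact ((key k a b hb).1).1
end

section
/- Let q ≥ 2 and let f : ℕ → ℝ be a q-regular function with a zero-insensitive minimal linear representation (uᵀ, (M_i)_{0 ≤ i < q}, v) of dimension d, i.e., f(n) = uᵀ M_{n₀} M_{n₁} ⋯ M_{n_L} v where n_L ⋯ n₁ n₀ is the q-ary expansion of n (and f(0) = uᵀ v), with M₀ v = v, and no linear representation of f has dimension smaller than d. Then for a nonnegative integer r, the following are equivalent: (i) f is q-quasimultiplicative with parameter r; (ii) M₀^r = v uᵀ. -/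
open Matrix

/-- `f` is `q`-quasimultiplicative with parameter `r`. -/
def QuasiMultiplicative (q r : ℕ) (f : ℕ → ℝ) : Prop :=
  ∀ a b k : ℕ, b < q ^ k → f (q ^ (k + r) * a + b) = f a * f b

/-- `(uᵀ, (M_i), v)` is a linear representation of dimension `d` of `f` in base `q`:
`f(n) = uᵀ M_{n₀} M_{n₁} ⋯ M_{n_L} v` where `n_L ⋯ n₁ n₀` is the `q`-ary expansion of `n`
(and `f(0) = uᵀ v`, corresponding to the empty expansion). -/
def IsLinearRepresentation (q d : ℕ) (f : ℕ → ℝ) (u : Fin d → ℝ)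
    (M : ℕ → Matrix (Fin d) (Fin d) ℝ) (v : Fin d → ℝ) : Prop :=
  ∀ n : ℕ, f n = u ⬝ᵥ (((Nat.digits q n).map M).prod *ᵥ v)

/-!
Work with arbitrary words `l` over the digits `0, …, q-1` rather than with integers, writing
`M_l = M_{l₀} ⋯ M_{l_k}`. Zero-insensitivity gives `f (ofDigits q l) = uᵀ M_l v` for every word,
so quasimultiplicativity says exactly that `uᵀ M_w M₀^r M_l v = uᵀ M_w (v uᵀ) M_l v` for all
words `w, l`. The implication from `M₀^r = v uᵀ` is then immediate. Conversely, minimality forces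
the vectors `M_l v` and `M_wᵀ u` to span the whole space: otherwise restricting the
representation to the span of the `M_l v` (or, after transposing and reversing words, to the span
of the `M_wᵀ u`) would represent `f` in smaller dimension. A matrix whose bilinear form vanishes
on two spanning sets is zero.
-/

theorem Nat.ofDigits_append_replicate_zero_append (q r : ℕ) (l₁ l₂ : List ℕ) :
    Nat.ofDigits q (l₂ ++ List.replicate r 0 ++ l₁) =
      q ^ (l₂.length + r) * Nat.ofDigits q l₁ + Nat.ofDigits q l₂ := by
  rw [Nat.ofDigits_append, Nat.ofDigits_append_replicate_zero, List.length_append,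
    List.length_replicate, add_comm]

theorem quasiMultiplicative_iff_ofDigits {q : ℕ} (hq : 1 < q) (r : ℕ) (f : ℕ → ℝ) :
    QuasiMultiplicative q r f ↔ ∀ l₁ l₂ : List ℕ, (∀ i ∈ l₁, i < q) → (∀ i ∈ l₂, i < q) →
      f (Nat.ofDigits q (l₂ ++ List.replicate r 0 ++ l₁)) =
        f (Nat.ofDigits q l₁) * f (Nat.ofDigits q l₂) := by
  simp only [Nat.ofDigits_append_replicate_zero_append]
  refine ⟨fun h l₁ l₂ _ hl₂ => h _ _ _ (Nat.ofDigits_lt_base_pow_length hq hl₂),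
    fun h a b k hb => ?_⟩
  -- pad the digits of `b` with zeros to length exactly `k`
  have hlen : (Nat.digits q b).length ≤ k := (Nat.digits_length_le_iff hq b).2 hb
  have := h (Nat.digits q a) (Nat.digits q b ++ List.replicate (k - (Nat.digits q b).length) 0)
    (fun _ => Nat.digits_lt_base hq) (by
      simp only [List.mem_append, List.mem_replicate]
      rintro i (hi | ⟨-, rfl⟩)
      exacts [Nat.digits_lt_base hq hi, by omega])
  simpa [Nat.ofDigits_digits, Nat.add_sub_cancel' hlen] using this

section Matrices

variable {R : Type*} [CommSemiring R] {m n : Type*} [Fintype m] [Fintype n]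

theorem transpose_mulVec_dotProduct (A : Matrix m n R) (u : m → R) (w : n → R) :
    (Aᵀ *ᵥ u) ⬝ᵥ w = u ⬝ᵥ (A *ᵥ w) := by
  rw [mulVec_transpose, ← dotProduct_mulVec]

variable [DecidableEq n]

theorem eq_of_dotProduct_mulVec_eq [DecidableEq m] {S : Set (m → R)} {T : Set (n → R)}
    (hS : Submodule.span R S = ⊤) (hT : Submodule.span R T = ⊤) {A B : Matrix m n R}
    (h : ∀ x ∈ S, ∀ y ∈ T, x ⬝ᵥ (A *ᵥ y) = x ⬝ᵥ (B *ᵥ y)) : A = B :=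
  (Matrix.toLinearMap₂' R).injective <| LinearMap.ext_on hS fun x hx =>
    LinearMap.ext_on hT fun y hy => by simpa [toLinearMap₂'_apply'] using h x hx y hy

theorem prod_map_digits_ofDigits_mulVec {q : ℕ} (hq : 1 < q) {M : ℕ → Matrix n n R}
    {v : n → R} (hzero : M 0 *ᵥ v = v) {l : List ℕ} (hl : ∀ i ∈ l, i < q) :
    ((Nat.digits q (Nat.ofDigits q l)).map M).prod *ᵥ v = (l.map M).prod *ᵥ v := by
  induction l with
  | nil => simp
  | cons i t ih =>
    rw [List.forall_mem_cons] at hl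
    rw [Nat.ofDigits_cons, List.map_cons, List.prod_cons, ← mulVec_mulVec, ← ih hl.2]
    by_cases h : i = 0 ∧ Nat.ofDigits q t = 0
    · simp [h, hzero]
    · rw [Nat.digits_add q hq _ _ hl.1 (not_and_or.1 h), List.map_cons, List.prod_cons,
        ← mulVec_mulVec]

theorem dotProduct_prod_map_mulVec_eq_reverse (u v : n → R) (M : ℕ → Matrix n n R)
    (l : List ℕ) :
    u ⬝ᵥ ((l.map M).prod *ᵥ v) = v ⬝ᵥ ((l.reverse.map fun i => (M i)ᵀ).prod *ᵥ u) := by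
  rw [← transpose_mulVec_dotProduct, dotProduct_comm, transpose_list_prod, List.map_map,
    List.map_reverse]
  rfl

end Matrices

section Restriction

variable {K : Type*} [Field K] {n : Type*} [Fintype n]

theorem dotProduct_coe_eq_dotProduct_repr {ι : Type*} [Fintype ι] (u : n → K)
    {V : Submodule K (n → K)} (b : Module.Basis ι K V) (x : V) :
    u ⬝ᵥ (x : n → K) = (fun j => u ⬝ᵥ (b j : n → K)) ⬝ᵥ b.repr x := by
  conv_lhs => rw [← b.sum_repr x]
  simp only [Submodule.coe_sum, Submodule.coe_smul, dotProduct_sum, dotProduct_smul,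
    smul_eq_mul]
  exact Finset.sum_congr rfl fun j _ => mul_comm _ _

variable [DecidableEq n]

theorem exists_words_eq_of_mulVec_mem (q : ℕ) (u v : n → K) (M : ℕ → Matrix n n K)
    (V : Submodule K (n → K)) (hv : v ∈ V) (hM : ∀ i < q, ∀ x ∈ V, M i *ᵥ x ∈ V) :
    ∃ (u' v' : Fin (Module.finrank K V) → K) (M' : ℕ → Matrix _ _ K),
      ∀ l : List ℕ, (∀ i ∈ l, i < q) →
        u ⬝ᵥ ((l.map M).prod *ᵥ v) = u' ⬝ᵥ ((l.map M').prod *ᵥ v') := by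
  let b := Module.finBasis K V
  let φ : ℕ → Module.End K V := fun i =>
    if h : i < q then (M i).mulVecLin.restrict (hM i h) else 0
  have hφ : ∀ l : List ℕ, (∀ i ∈ l, i < q) → ∀ x : V,
      ((l.map φ).prod x : n → K) = (l.map M).prod *ᵥ x := by
    intro l hl x
    induction l with
    | nil => simp
    | cons i t ih =>
      rw [List.forall_mem_cons] at hl
      rw [List.map_cons, List.prod_cons, Module.End.mul_apply, List.map_cons, List.prod_cons,
        ← mulVec_mulVec, ← ih hl.2]
      simp only [φ, dif_pos hl.1]
      rfl
  refine ⟨fun j => u ⬝ᵥ (b j : n → K), b.repr ⟨v, hv⟩,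
    fun i => LinearMap.toMatrixAlgEquiv b (φ i), fun l hl => ?_⟩
  have hprod : (l.map fun i => LinearMap.toMatrixAlgEquiv b (φ i)).prod =
      LinearMap.toMatrix b b (l.map φ).prod := by
    change (l.map (LinearMap.toMatrixAlgEquiv b ∘ φ)).prod = _
    rw [← List.map_map, ← map_list_prod]
    rfl
  rw [hprod, LinearMap.toMatrix_mulVec_repr, ← dotProduct_coe_eq_dotProduct_repr, hφ l hl]

theorem exists_words_eq_of_transpose_mulVec_mem (q : ℕ) (u v : n → K) (M : ℕ → Matrix n n K)
    (U : Submodule K (n → K)) (hu : u ∈ U) (hM : ∀ i < q, ∀ x ∈ U, (M i)ᵀ *ᵥ x ∈ U) :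
    ∃ (u' v' : Fin (Module.finrank K U) → K) (M' : ℕ → Matrix _ _ K),
      ∀ l : List ℕ, (∀ i ∈ l, i < q) →
        u ⬝ᵥ ((l.map M).prod *ᵥ v) = u' ⬝ᵥ ((l.map M').prod *ᵥ v') := by
  obtain ⟨v', u', M', h⟩ := exists_words_eq_of_mulVec_mem q v u (fun i => (M i)ᵀ) U hu hM
  refine ⟨u', v', fun i => (M' i)ᵀ, fun l hl => ?_⟩
  rw [dotProduct_prod_map_mulVec_eq_reverse, h _ (by simpa using hl),
    dotProduct_prod_map_mulVec_eq_reverse u']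
  simp

end Restriction

section LinearRepresentation

def IsMinimalDimension (q d : ℕ) (f : ℕ → ℝ) : Prop :=
  ∀ (d' : ℕ) (u' : Fin d' → ℝ) (M' : ℕ → Matrix (Fin d') (Fin d') ℝ) (v' : Fin d' → ℝ),
    IsLinearRepresentation q d' f u' M' v' → d ≤ d'

variable {q d : ℕ} {f : ℕ → ℝ} {u v : Fin d → ℝ} {M : ℕ → Matrix (Fin d) (Fin d) ℝ}

theorem IsLinearRepresentation.apply_ofDigits (hq : 1 < q)
    (hrep : IsLinearRepresentation q d f u M v) (hzero : M 0 *ᵥ v = v) {l : List ℕ}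
    (hl : ∀ i ∈ l, i < q) : f (Nat.ofDigits q l) = u ⬝ᵥ ((l.map M).prod *ᵥ v) := by
  rw [hrep, prod_map_digits_ofDigits_mulVec hq hzero hl]

theorem IsLinearRepresentation.quasiMultiplicative_iff (hq : 1 < q) (r : ℕ)
    (hrep : IsLinearRepresentation q d f u M v) (hzero : M 0 *ᵥ v = v) :
    QuasiMultiplicative q r f ↔ ∀ l₁ l₂ : List ℕ, (∀ i ∈ l₁, i < q) → (∀ i ∈ l₂, i < q) →
      u ⬝ᵥ (((l₂.map M).prod * M 0 ^ r * (l₁.map M).prod) *ᵥ v) =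
        u ⬝ᵥ (((l₂.map M).prod * vecMulVec v u * (l₁.map M).prod) *ᵥ v) := by
  rw [quasiMultiplicative_iff_ofDigits hq]
  refine forall₄_congr fun l₁ l₂ hl₁ hl₂ => ?_
  have hl : ∀ i ∈ l₂ ++ List.replicate r 0 ++ l₁, i < q := by
    simp only [List.mem_append, List.mem_replicate]
    rintro i ((hi | ⟨-, rfl⟩) | hi)
    exacts [hl₂ i hi, by omega, hl₁ i hi]
  rw [hrep.apply_ofDigits hq hzero hl, hrep.apply_ofDigits hq hzero hl₁,
    hrep.apply_ofDigits hq hzero hl₂]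
  simp [← mulVec_mulVec, vecMulVec_mulVec, mulVec_smul, dotProduct_smul]

theorem IsLinearRepresentation.eq_top_of_minimal (hq : 1 < q)
    (hrep : IsLinearRepresentation q d f u M v)
    (hmin : IsMinimalDimension q d f)
    (V : Submodule ℝ (Fin d → ℝ))
    (hV : ∃ (u' v' : Fin (Module.finrank ℝ V) → ℝ) (M' : ℕ → Matrix _ _ ℝ),
      ∀ l : List ℕ, (∀ i ∈ l, i < q) →
        u ⬝ᵥ ((l.map M).prod *ᵥ v) = u' ⬝ᵥ ((l.map M').prod *ᵥ v')) :
    V = ⊤ := by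
  obtain ⟨u', v', M', h⟩ := hV
  have hle : d ≤ Module.finrank ℝ V :=
    hmin _ u' M' v' fun n => (hrep n).trans (h _ fun _ => Nat.digits_lt_base hq)
  apply Submodule.eq_top_of_finrank_eq
  have := V.finrank_le
  rw [Module.finrank_fin_fun] at this ⊢
  omega

theorem IsLinearRepresentation.span_mulVec_eq_top_of_minimal (hq : 1 < q)
    (hrep : IsLinearRepresentation q d f u M v)
    (hmin : IsMinimalDimension q d f) :
    Submodule.span ℝ {x | ∃ l : List ℕ, (∀ i ∈ l, i < q) ∧ (l.map M).prod *ᵥ v = x} = ⊤ := by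
  refine hrep.eq_top_of_minimal hq hmin _ (exists_words_eq_of_mulVec_mem q u v M _
    (Submodule.subset_span ⟨[], by simp, by simp⟩) fun i hi x hx => ?_)
  refine (Submodule.span_le (p := (Submodule.span ℝ _).comap (M i).mulVecLin)).2 ?_ hx
  rintro _ ⟨l, hl, rfl⟩
  exact Submodule.subset_span ⟨i :: l, List.forall_mem_cons.2 ⟨hi, hl⟩, by simp [mulVec_mulVec]⟩

theorem IsLinearRepresentation.span_transpose_mulVec_eq_top_of_minimal (hq : 1 < q)
    (hrep : IsLinearRepresentation q d f u M v)
    (hmin : IsMinimalDimension q d f) :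
    Submodule.span ℝ {x | ∃ l : List ℕ, (∀ i ∈ l, i < q) ∧ (l.map M).prodᵀ *ᵥ u = x} = ⊤ := by
  refine hrep.eq_top_of_minimal hq hmin _ (exists_words_eq_of_transpose_mulVec_mem q u v M _
    (Submodule.subset_span ⟨[], by simp, by simp⟩) fun i hi x hx => ?_)
  refine (Submodule.span_le (p := (Submodule.span ℝ _).comap (M i)ᵀ.mulVecLin)).2 ?_ hx
  rintro _ ⟨l, hl, rfl⟩
  exact Submodule.subset_span ⟨l ++ [i], List.forall_mem_append.2 ⟨hl, by simpa using hi⟩,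
    by simp only [List.map_append, List.map_singleton, List.prod_append, List.prod_singleton,
      transpose_mul, mulVecLin_apply, mulVec_mulVec]⟩

end LinearRepresentation

/-- Characterisation of `q`-quasimultiplicativity of a `q`-regular function: if `f` has a
zero-insensitive (`M₀ v = v`) minimal linear representation `(uᵀ, (M_i), v)`, then `f` is
`q`-quasimultiplicative with parameter `r` if and only if `M₀^r = v uᵀ`. -/
theorem qRegular_quasiMultiplicative_iff (q d r : ℕ) (hq : 2 ≤ q) (f : ℕ → ℝ)
    (u v : Fin d → ℝ) (M : ℕ → Matrix (Fin d) (Fin d) ℝ)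
    (hrep : IsLinearRepresentation q d f u M v)
    (hzero : M 0 *ᵥ v = v)
    (hmin : ∀ (d' : ℕ) (u' : Fin d' → ℝ) (M' : ℕ → Matrix (Fin d') (Fin d') ℝ)
      (v' : Fin d' → ℝ), IsLinearRepresentation q d' f u' M' v' → d ≤ d') :
    QuasiMultiplicative q r f ↔ M 0 ^ r = Matrix.vecMulVec v u := by
  rw [hrep.quasiMultiplicative_iff hq r hzero]
  refine ⟨fun h => eq_of_dotProduct_mulVec_eq
    (hrep.span_transpose_mulVec_eq_top_of_minimal hq hmin)
    (hrep.span_mulVec_eq_top_of_minimal hq hmin) ?_, fun h _ _ _ _ => by rw [h]⟩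
  rintro _ ⟨l₂, hl₂, rfl⟩ _ ⟨l₁, hl₁, rfl⟩
  simpa only [transpose_mulVec_dotProduct, ← mulVec_mulVec] using h l₁ l₂ hl₁ hl₂
end

section
/- Let q ≥ 2 and let f : ℕ → ℝ be a q-regular function with a zero-insensitive linear representation (uᵀ, (M_i)_{0 ≤ i < q}, v) of dimension d. Let U ⊆ ℝ^d be the linear span of all vectors of the form (M_{i₁} M_{i₂} ⋯ M_{i_m})ᵀ u − u over all finite (possibly empty) products of the matrices M₀, …, M_{q−1} (so U is the smallest subspace such that every row vector uᵀ ∏ M_{i_j} lies in the affine subspace uᵀ + Uᵀ), and let V ⊆ ℝ^d be the linear span of all vectors of the form M_{j₁} M_{j₂} ⋯ M_{j_m} v − v. Then for a nonnegative integer r, f is q-quasiadditive with parameter r if and only if all of the following hold: (1) uᵀ v = 0; (2) xᵀ (M₀^r − I) v = 0 for all x ∈ U; (3) uᵀ (M₀^r − I) y = 0 for all y ∈ V; (4) xᵀ M₀^r y = 0 for all x ∈ U and y ∈ V. -/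
open Matrix

/-- `f` is `q`-quasiadditive with parameter `r`. -/
def QuasiAdditive (q r : ℕ) (f : ℕ → ℝ) : Prop :=
  ∀ a b k : ℕ, b < q ^ k → f (q ^ (k + r) * a + b) = f a + f b

/-- A matrix power fixing a fixed vector. -/
lemma QA.pow_fix {d : ℕ} {A : Matrix (Fin d) (Fin d) ℝ} {v : Fin d → ℝ}
    (h : A *ᵥ v = v) : ∀ t : ℕ, A ^ t *ᵥ v = v
  | 0 => by simp
  | t + 1 => by
      rw [pow_succ, ← Matrix.mulVec_mulVec, h, QA.pow_fix h t]

/-- Every list of digits `< q` is the canonical digit expansion of its value,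
followed by trailing zeros. -/
lemma QA.decomp (q : ℕ) (hq : 2 ≤ q) :
    ∀ L : List ℕ, (∀ i ∈ L, i < q) →
      ∃ t, L = Nat.digits q (Nat.ofDigits q L) ++ List.replicate t 0 := by
  intro L
  induction L using List.reverseRecOn with
  | nil => exact fun _ => ⟨0, by simp⟩
  | append_singleton L a ih =>
    intro hL
    by_cases ha : a = 0
    · subst ha
      obtain ⟨t, ht⟩ := ih fun i hi => hL i (List.mem_append_left _ hi)
      refine ⟨t + 1, ?_⟩
      have h1 : Nat.ofDigits q (L ++ [0]) = Nat.ofDigits q L := by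
        simp [Nat.ofDigits_append]
      rw [h1, List.replicate_succ', ← List.append_assoc, ← ht]
    · refine ⟨0, ?_⟩
      rw [Nat.digits_ofDigits q (by omega) _ hL ?_]
      · simp
      · intro _
        rw [List.getLast_concat]
        exact ha

/-- Characterisation of `q`-quasiadditivity of a `q`-regular function with a
zero-insensitive linear representation `(uᵀ, (M_i), v)`. Here `U` is the span of all
vectors `uᵀ ∏ M_{i_j} − uᵀ` (over finite, possibly empty, products of `M₀, …, M_{q−1}`),
the smallest subspace such that all row vectors `uᵀ ∏ M_{i_j}` lie in `uᵀ + Uᵀ`, and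
`V` is the span of all vectors `∏ M_{j_m} v − v`. Then `f` is `q`-quasiadditive with
parameter `r` iff `uᵀv = 0`, `Uᵀ ⟂ (M₀^r − I)v`, `uᵀ(M₀^r − I) ⟂ V` and `Uᵀ M₀^r V = 0`. -/
theorem qRegular_quasiAdditive_iff (q d r : ℕ) (hq : 2 ≤ q) (f : ℕ → ℝ)
    (u v : Fin d → ℝ) (M : ℕ → Matrix (Fin d) (Fin d) ℝ)
    (hrep : IsLinearRepresentation q d f u M v)
    (hzero : M 0 *ᵥ v = v)
    (U : Submodule ℝ (Fin d → ℝ))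
    (hU : U = Submodule.span ℝ
      {x : Fin d → ℝ | ∃ L : List ℕ, (∀ i ∈ L, i < q) ∧ x = u ᵥ* (L.map M).prod - u})
    (V : Submodule ℝ (Fin d → ℝ))
    (hV : V = Submodule.span ℝ
      {y : Fin d → ℝ | ∃ L : List ℕ, (∀ i ∈ L, i < q) ∧ y = (L.map M).prod *ᵥ v - v}) :
    QuasiAdditive q r f ↔
      (u ⬝ᵥ v = 0 ∧
       (∀ x ∈ U, x ⬝ᵥ ((M 0 ^ r - 1) *ᵥ v) = 0) ∧
       (∀ y ∈ V, (u ᵥ* (M 0 ^ r - 1)) ⬝ᵥ y = 0) ∧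
       (∀ x ∈ U, ∀ y ∈ V, x ⬝ᵥ (M 0 ^ r *ᵥ y) = 0)) := by
  have hq1 : 1 < q := hq
  set P : List ℕ → Matrix (Fin d) (Fin d) ℝ := fun L => (L.map M).prod with hP
  have hMv : ∀ t : ℕ, M 0 ^ t *ᵥ v = v := QA.pow_fix hzero
  have hPrep : ∀ t : ℕ, P (List.replicate t 0) = M 0 ^ t := by
    intro t; simp [hP, List.map_replicate, List.prod_replicate]
  have hPapp : ∀ L L' : List ℕ, P (L ++ L') = P L * P L' := by
    intro L L'; simp [hP, List.prod_append]
  have hfold : ∀ L : List ℕ, (List.map M L).prod = P L := fun _ => rfl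
  have hf0 : f 0 = u ⬝ᵥ v := by simpa using hrep 0
  -- condition (2) is automatic
  have hzv : (M 0 ^ r - 1) *ᵥ v = 0 := by
    rw [Matrix.sub_mulVec, hMv, Matrix.one_mulVec, sub_self]
  -- the key identity, stated for arbitrary digit lists
  have keyiff : ∀ L L' : List ℕ, (∀ i ∈ L, i < q) → (∀ i ∈ L', i < q) →
      (u ⬝ᵥ ((P L * M 0 ^ r * P L') *ᵥ v)
        = u ⬝ᵥ (P L *ᵥ v) + u ⬝ᵥ (P L' *ᵥ v)
      ↔ u ⬝ᵥ ((P L * M 0 ^ r * P L') *ᵥ v)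
        = u ⬝ᵥ (P L *ᵥ v) + u ⬝ᵥ (P L' *ᵥ v)) := fun _ _ _ _ => Iff.rfl
  clear keyiff
  constructor
  · -- quasiadditive → conditions
    intro hQA
    have h0 : u ⬝ᵥ v = 0 := by
      have := hQA 0 0 0 (by simp)
      simp only [mul_zero, zero_add] at this
      have hf00 : f 0 = 0 := by linarith
      rw [hf0] at hf00; exact hf00
    -- key identity from quasiadditivity
    have key : ∀ L L' : List ℕ, (∀ i ∈ L, i < q) → (∀ i ∈ L', i < q) →
        u ⬝ᵥ ((P L * M 0 ^ r * P L') *ᵥ v)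
          = u ⬝ᵥ (P L *ᵥ v) + u ⬝ᵥ (P L' *ᵥ v) := by
      intro L L' hL hL'
      obtain ⟨t, ht⟩ := QA.decomp q hq L hL
      obtain ⟨s, hs⟩ := QA.decomp q hq L' hL'
      set b := Nat.ofDigits q L with hb
      set a := Nat.ofDigits q L' with ha
      have hPL : P L = P (Nat.digits q b) * M 0 ^ t := by
        rw [ht, hPapp, hPrep]
      have hPL' : P L' = P (Nat.digits q a) * M 0 ^ s := by
        rw [hs, hPapp, hPrep]
      have hPLv : P L *ᵥ v = P (Nat.digits q b) *ᵥ v := by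
        rw [hPL, ← Matrix.mulVec_mulVec, hMv]
      have hPL'v : P L' *ᵥ v = P (Nat.digits q a) *ᵥ v := by
        rw [hPL', ← Matrix.mulVec_mulVec, hMv]
      have hlhs : (P L * M 0 ^ r * P L') *ᵥ v
          = (P (Nat.digits q b) * M 0 ^ (t + r)) *ᵥ (P (Nat.digits q a) *ᵥ v) := by
        simp only [hPL, hPL', pow_add, ← Matrix.mulVec_mulVec, hMv]
      rw [hlhs, hPLv, hPL'v]
      by_cases haz : a = 0
      · -- a = 0 : digits a = [], use M₀ fixing v and u⬝v = 0
        rw [haz]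
        simp only [Nat.digits_zero, hP, List.map_nil, List.prod_nil, Matrix.one_mulVec]
        rw [← Matrix.mulVec_mulVec, hMv, h0, add_zero]
      · -- a ≠ 0 : use quasiadditivity at k = (digits q b).length + t
        set lb := (Nat.digits q b).length with hlb
        have hbk : b < q ^ (lb + t) := by
          calc b < q ^ lb := Nat.lt_base_pow_length_digits hq1
          _ ≤ q ^ (lb + t) := Nat.pow_le_pow_right (by omega) (by omega)
        have harg : q ^ (lb + t + r) * a + b = b + q ^ (lb + (t + r)) * a := by
          rw [← add_assoc]; ring
        have hdig : Nat.digits q (q ^ (lb + t + r) * a + b)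
            = Nat.digits q b ++ List.replicate (t + r) 0 ++ Nat.digits q a := by
          rw [harg]
          exact (Nat.digits_append_zeroes_append_digits hq1 (Nat.pos_of_ne_zero haz)).symm
        have := hQA a b (lb + t) hbk
        rw [hrep (q ^ (lb + t + r) * a + b), hrep a, hrep b, hdig] at this
        simp only [hfold] at this
        rw [hPapp, hPapp, hPrep] at this
        simp only [← Matrix.mulVec_mulVec, pow_add, hMv] at this ⊢
        rw [this]
        ring
    refine ⟨h0, ?_, ?_, ?_⟩
    · intro x _; rw [hzv]; simp
    · -- condition (3)
      subst hV
      intro y hy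
      induction hy using Submodule.span_induction with
      | mem y hy =>
        obtain ⟨L', hL', rfl⟩ := hy
        have k1 := key [] L' (by simp) hL'
        simp only [hP, List.map_nil, List.prod_nil, one_mul, Matrix.one_mulVec] at k1
        rw [← Matrix.dotProduct_mulVec]
        have hA : (M 0 ^ r - 1) *ᵥ ((List.map M L').prod *ᵥ v - v)
            = (M 0 ^ r * (List.map M L').prod) *ᵥ v - (List.map M L').prod *ᵥ v := by
          rw [Matrix.sub_mulVec, Matrix.one_mulVec, Matrix.mulVec_sub, hMv,
            Matrix.mulVec_mulVec]
          abel
        rw [hA, dotProduct_sub]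
        linarith [k1, h0]
      | zero => simp
      | add x y hx hy h1 h2 => rw [dotProduct_add, h1, h2, add_zero]
      | smul a x hx h1 => rw [dotProduct_smul, h1, smul_zero]
    · -- condition (4)
      subst hU; subst hV
      intro x hx
      induction hx using Submodule.span_induction with
      | mem x hx =>
        intro y hy
        induction hy using Submodule.span_induction with
        | mem y hy =>
          obtain ⟨L, hL, rfl⟩ := hx
          obtain ⟨L', hL', rfl⟩ := hy
          have k1 := key L L' hL hL'
          have k3 := key [] L' (by simp) hL'
          simp only [hP, List.map_nil, List.prod_nil, one_mul, mul_one,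
            Matrix.one_mulVec] at k1 k3
          have hA : M 0 ^ r *ᵥ ((List.map M L').prod *ᵥ v - v)
              = (M 0 ^ r * (List.map M L').prod) *ᵥ v - v := by
            rw [Matrix.mulVec_sub, hMv, Matrix.mulVec_mulVec]
          rw [hA, sub_dotProduct, dotProduct_sub, dotProduct_sub]
          have e1 : (u ᵥ* (List.map M L).prod) ⬝ᵥ ((M 0 ^ r * (List.map M L').prod) *ᵥ v)
              = u ⬝ᵥ (((List.map M L).prod * M 0 ^ r * (List.map M L').prod) *ᵥ v) := by
            rw [← Matrix.dotProduct_mulVec, Matrix.mulVec_mulVec, ← mul_assoc]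
          have e2 : (u ᵥ* (List.map M L).prod) ⬝ᵥ v = u ⬝ᵥ ((List.map M L).prod *ᵥ v) := by
            rw [Matrix.dotProduct_mulVec]
          rw [e1, e2]
          linarith [k1, k3, h0]
        | zero => simp
        | add y z hy hz h1 h2 => rw [Matrix.mulVec_add, dotProduct_add, h1, h2, add_zero]
        | smul a y hy h1 => rw [Matrix.mulVec_smul, dotProduct_smul, h1, smul_zero]
      | zero => intro y hy; simp
      | add x z hx hz h1 h2 => intro y hy; rw [add_dotProduct, h1 y hy, h2 y hy, add_zero]
      | smul a x hx h1 => intro y hy; rw [smul_dotProduct, h1 y hy, smul_zero]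
  · -- conditions → quasiadditive
    rintro ⟨h0, _h2, h3, h4⟩
    -- key identity from the conditions
    have key : ∀ L L' : List ℕ, (∀ i ∈ L, i < q) → (∀ i ∈ L', i < q) →
        u ⬝ᵥ ((P L * M 0 ^ r * P L') *ᵥ v)
          = u ⬝ᵥ (P L *ᵥ v) + u ⬝ᵥ (P L' *ᵥ v) := by
      intro L L' hL hL'
      have hxU : u ᵥ* P L - u ∈ U := by
        rw [hU]; exact Submodule.subset_span ⟨L, hL, rfl⟩
      have hyV : P L' *ᵥ v - v ∈ V := by
        rw [hV]; exact Submodule.subset_span ⟨L', hL', rfl⟩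
      set x := u ᵥ* P L - u with hxdef
      set y := P L' *ᵥ v - v with hydef
      have e3 : u ⬝ᵥ (M 0 ^ r *ᵥ y) = u ⬝ᵥ y := by
        have := h3 y hyV
        rw [← Matrix.dotProduct_mulVec, Matrix.sub_mulVec, Matrix.one_mulVec,
          dotProduct_sub] at this
        linarith
      have e4 : x ⬝ᵥ (M 0 ^ r *ᵥ y) = 0 := h4 x hxU y hyV
      have hw : (P L * M 0 ^ r * P L') *ᵥ v
          = P L *ᵥ (v + M 0 ^ r *ᵥ y) := by
        have hvy : v + M 0 ^ r *ᵥ y = M 0 ^ r *ᵥ (P L' *ᵥ v) := by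
          rw [hydef, Matrix.mulVec_sub, hMv]; abel
        rw [hvy]
        simp only [Matrix.mulVec_mulVec, mul_assoc]
      rw [hw, Matrix.dotProduct_mulVec]
      have hu : u ᵥ* P L = u + x := by rw [hxdef]; abel
      rw [hu, add_dotProduct, dotProduct_add, dotProduct_add, e3, e4, add_zero]
      have h1 : u ⬝ᵥ y = u ⬝ᵥ (P L' *ᵥ v) - u ⬝ᵥ v := by
        rw [hydef, dotProduct_sub]
      have h2 : x ⬝ᵥ v = u ⬝ᵥ (P L *ᵥ v) - u ⬝ᵥ v := by
        rw [hxdef, sub_dotProduct, Matrix.dotProduct_mulVec]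
      rw [h1, h2, h0]
      ring
    intro a b k hbk
    by_cases haz : a = 0
    · subst haz
      simp only [mul_zero, zero_add]
      rw [hrep 0]
      simp only [Nat.digits_zero, List.map_nil, List.prod_nil, Matrix.one_mulVec]
      rw [h0, zero_add]
    · have hlb : (Nat.digits q b).length ≤ k := by
        rcases Nat.eq_zero_or_pos b with rfl | hbpos
        · simp
        · have h1 : q ^ (Nat.digits q b).length ≤ q * b :=
            Nat.base_pow_length_digits_le q b hq1 (by omega)
          have h3 : q * b < q * q ^ k := mul_lt_mul_of_pos_left hbk (by omega)
          have h4 : q ^ (Nat.digits q b).length < q ^ (k + 1) := by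
            calc q ^ (Nat.digits q b).length ≤ q * b := h1
              _ < q * q ^ k := h3
              _ = q ^ (k + 1) := by ring
          have := (Nat.pow_lt_pow_iff_right hq1).mp h4
          omega
      set lb := (Nat.digits q b).length with hlbdef
      have hexp : lb + (k + r - lb) = k + r := by omega
      have harg : q ^ (k + r) * a + b = b + q ^ (lb + (k + r - lb)) * a := by
        rw [hexp]; ring
      have hdig : Nat.digits q (q ^ (k + r) * a + b)
          = Nat.digits q b ++ List.replicate (k + r - lb) 0 ++ Nat.digits q a := by
        rw [harg]
        exact (Nat.digits_append_zeroes_append_digits hq1 (Nat.pos_of_ne_zero haz)).symm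
      rw [hrep (q ^ (k + r) * a + b), hrep a, hrep b, hdig]
      simp only [hfold]
      have hsplit : (k + r - lb) = (k - lb) + r := by omega
      set L : List ℕ := Nat.digits q b ++ List.replicate (k - lb) 0 with hLdef
      have hLlt : ∀ i ∈ L, i < q := by
        intro i hi
        rcases List.mem_append.mp hi with h | h
        · exact Nat.digits_lt_base hq1 h
        · rw [List.eq_of_mem_replicate h]; omega
      have hL'lt : ∀ i ∈ Nat.digits q a, i < q := fun i hi => Nat.digits_lt_base hq1 hi
      have hprodeq : P (Nat.digits q b ++ List.replicate (k + r - lb) 0 ++ Nat.digits q a)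
          = P L * M 0 ^ r * P (Nat.digits q a) := by
        rw [hPapp, hPapp, hLdef, hPapp, hPrep, hPrep, hsplit, pow_add]
        noncomm_ring
      have hPLv : P L *ᵥ v = P (Nat.digits q b) *ᵥ v := by
        rw [hLdef, hPapp, hPrep, ← Matrix.mulVec_mulVec, hMv]
      have := key L (Nat.digits q a) hLlt hL'lt
      rw [hPLv] at this
      rw [hprodeq, this]
      ring
end
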